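/- Let X be a compact Hausdorff totally disconnected topological space, and let Clopens(X) be the Boolean algebra of clopen subsets of X. Then the evaluation map sending x ∈ X to the homomorphism Clopens(X) → Bool given by b ↦ (x ∈ b) is a homeomorphism from X onto the Stone space St(Clopens(X)). -/

import Mathlib

open TopologicalSpace

/-- `φ : B → Bool` is a Boolean algebra homomorphism: it preserves `⊤`, `⊥`,
meets, joins and complements. -/
def IsBoolHom {B : Type*} [BooleanAlgebra B] (φ : B → Bool) : Prop :=
  φ ⊤ = ⊤ ∧ φ ⊥ = ⊥ ∧ (∀ a b : B, φ (a ⊓ b) = φ a ⊓ φ b) ∧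
  (∀ a b : B, φ (a ⊔ b) = φ a ⊔ φ b) ∧ (∀ a : B, φ aᶜ = (φ a)ᶜ)

/-- The Stone space of a Boolean algebra `B`: the set of Boolean algebra
homomorphisms `B → Bool`. -/
def StoneSpace (B : Type*) [BooleanAlgebra B] : Type _ :=
  {φ : B → Bool // IsBoolHom φ}

/-- The Stone space is topologized as a subspace of the product `Bool ^ B`,
where `Bool` carries the discrete topology. -/
instance (B : Type*) [BooleanAlgebra B] : TopologicalSpace (StoneSpace B) :=
  inferInstanceAs (TopologicalSpace {φ : B → Bool // IsBoolHom φ})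

instance (B : Type*) [BooleanAlgebra B] : T2Space (StoneSpace B) :=
  inferInstanceAs (T2Space {φ : B → Bool // IsBoolHom φ})

namespace Clopens

variable {X : Type*} [TopologicalSpace X]

open Classical in
noncomputable def evalBool (x : X) (b : Clopens X) : Bool :=
  decide (x ∈ (b : Set X))

@[simp]
lemma evalBool_eq_true_iff (x : X) (b : Clopens X) :
    evalBool x b = true ↔ x ∈ (b : Set X) := by
  simp [evalBool]

lemma isBoolHom_evalBool (x : X) : IsBoolHom (evalBool x) := by
  classical
  refine ⟨?_, ?_, fun a b => ?_, fun a b => ?_, fun a => ?_⟩ <;>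
    simp [evalBool, Bool.decide_and, Bool.decide_or]

noncomputable def toStoneSpace (x : X) : StoneSpace (Clopens X) :=
  ⟨evalBool x, isBoolHom_evalBool x⟩

lemma continuous_toStoneSpace : Continuous (toStoneSpace (X := X)) := by
  refine Continuous.subtype_mk (continuous_pi fun b => ?_) _
  rw [continuous_discrete_rng]
  rintro (_ | _)
  · convert b.isClosed.isOpen_compl
    ext x
    simp [evalBool]
  · convert b.isOpen
    ext x
    simp [evalBool]

lemma toStoneSpace_injective [TotallySeparatedSpace X] :
    Function.Injective (toStoneSpace (X := X)) := by
  intro x y hxy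
  by_contra hne
  obtain ⟨U, hU, hxU, hyU⟩ := exists_isClopen_of_totally_separated hne
  have hU_eq : evalBool x ⟨U, hU⟩ = evalBool y ⟨U, hU⟩ :=
    congrFun (congrArg Subtype.val hxy) ⟨U, hU⟩
  exact hyU (by simpa [evalBool, hxU] using hU_eq)

/-- The clopens sent to `true` form a down-directed family of nonempty closed sets, so by
compactness they have a common point. -/
lemma exists_mem_of_isBoolHom [CompactSpace X] {φ : Clopens X → Bool} (hφ : IsBoolHom φ) :
    ∃ x : X, ∀ b, φ b = true → x ∈ (b : Set X) := by
  obtain ⟨hTop, hBot, hInf, -, -⟩ := hφ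
  have : Nonempty {b : Clopens X // φ b = true} := ⟨⟨⊤, hTop⟩⟩
  have hdir : Directed (· ⊇ ·) fun b : {b : Clopens X // φ b = true} => (b.1 : Set X) :=
    fun a b => ⟨⟨a.1 ⊓ b.1, by simp [hInf, a.2, b.2]⟩,
      Set.inter_subset_left, Set.inter_subset_right⟩
  have hne : ∀ b : {b : Clopens X // φ b = true}, (b.1 : Set X).Nonempty := by
    rintro ⟨b, hb⟩
    rw [Set.nonempty_iff_ne_empty, Ne, ← Clopens.coe_bot, SetLike.coe_set_eq]
    rintro rfl
    simp [hBot] at hb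
  obtain ⟨x, hx⟩ := IsCompact.nonempty_iInter_of_directed_nonempty_isCompact_isClosed _ hdir hne
    (fun b => b.1.isClosed.isCompact) fun b => b.1.isClosed
  exact ⟨x, fun b hb => Set.mem_iInter.mp hx ⟨b, hb⟩⟩

lemma toStoneSpace_surjective [CompactSpace X] :
    Function.Surjective (toStoneSpace (X := X)) := by
  rintro ⟨φ, hφ⟩
  obtain ⟨x, hx⟩ := exists_mem_of_isBoolHom hφ
  have hCompl : ∀ b, φ bᶜ = !φ b := hφ.2.2.2.2
  refine ⟨x, Subtype.ext (funext fun b => ?_)⟩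
  change evalBool x b = φ b
  cases hb : φ b
  · have hbc : φ bᶜ = true := by simp [hCompl, hb]
    simpa [evalBool] using hx bᶜ hbc
  · simpa [evalBool] using hx b hb

end Clopens

/-- For a compact Hausdorff totally disconnected space `X`, the evaluation map
`x ↦ (b ↦ (x ∈ b))` is a homeomorphism from `X` onto the Stone space of the
Boolean algebra of clopen subsets of `X`. -/
theorem eval_homeomorph_stoneSpace_clopens
    (X : Type*) [TopologicalSpace X] [CompactSpace X] [T2Space X]
    [TotallyDisconnectedSpace X] :
    ∃ e : X ≃ₜ StoneSpace (Clopens X),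
      ∀ (x : X) (b : Clopens X), (e x).1 b = (⊤ : Bool) ↔ x ∈ (b : Set X) :=
  ⟨Clopens.continuous_toStoneSpace.homeoOfEquivCompactToT2
      (f := .ofBijective _ ⟨Clopens.toStoneSpace_injective, Clopens.toStoneSpace_surjective⟩),
    Clopens.evalBool_eq_true_iff⟩
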